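/- arXiv:2505.12123 — 2 statements merged into one kernel-verified Lean document; each statement's English description precedes it below -/
import Mathlib

section
/- Let X_p, X_q, X_p', X_q' be real random variables such that X_p' + X_q' = X_p + X_q holds with probability 1, and E[X_p' | X_p, X_q] = X_p and E[X_q' | X_p, X_q] = X_q. Then E[X_p' · X_q' | X_p, X_q] ≤ X_p · X_q. -/
open MeasureTheory

/-- Conditional Jensen for the square, via rational tangent lines. -/
lemma sq_condexp_le_condexp_sq {Ω : Type*} {m m0 : MeasurableSpace Ω} (hm : m ≤ m0)
    (μ : Measure Ω) [IsProbabilityMeasure μ] (f : Ω → ℝ)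
    (hf : Integrable f μ) (hf2 : Integrable (fun ω => f ω ^ 2) μ) :
    ∀ᵐ ω ∂μ, (μ[f|m]) ω ^ 2 ≤ (μ[fun ω => f ω ^ 2|m]) ω := by
  have hc : ∀ c : ℚ, ∀ᵐ ω ∂μ,
      2 * (c : ℝ) * (μ[f|m]) ω - (c : ℝ) ^ 2 ≤ (μ[fun ω => f ω ^ 2|m]) ω := by
    intro c
    have hg : Integrable (fun ω => (f ω - (c : ℝ)) ^ 2) μ := by
      have : (fun ω => (f ω - (c : ℝ)) ^ 2)
          = fun ω => f ω ^ 2 + ((-2 * (c : ℝ)) • f) ω + (c : ℝ) ^ 2 := by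
        funext ω; simp [smul_eq_mul]; ring
      rw [this]
      exact (hf2.add (hf.smul (-2 * (c : ℝ)))).add (integrable_const _)
    have h0 : (0 : Ω → ℝ) ≤ᵐ[μ] μ[fun ω => (f ω - (c : ℝ)) ^ 2|m] :=
      condExp_nonneg (Filter.Eventually.of_forall fun ω => sq_nonneg _)
    have heq : μ[fun ω => (f ω - (c : ℝ)) ^ 2|m]
        =ᵐ[μ] fun ω => (μ[fun ω => f ω ^ 2|m]) ω + (-2 * (c : ℝ)) * (μ[f|m]) ω + (c : ℝ) ^ 2 := by
      have h1 : (fun ω => (f ω - (c : ℝ)) ^ 2)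
          = (fun ω => f ω ^ 2 + ((-2 * (c : ℝ)) • f) ω) + fun _ => (c : ℝ) ^ 2 := by
        funext ω; simp [smul_eq_mul]; ring
      rw [h1]
      refine (condExp_add (m := m) (hf2.add (hf.smul (-2 * (c : ℝ)))) (integrable_const _)).trans ?_
      have h2 := condExp_add (m := m) hf2 (hf.smul (-2 * (c : ℝ)))
      have h3 := condExp_smul (m := m) (μ := μ) (-2 * (c : ℝ)) f
      have h4 := condExp_const hm ((c : ℝ) ^ 2) (μ := μ)
      filter_upwards [h2, h3] with ω h2 h3
      simp only [Pi.add_apply] at *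
      rw [h2, congrFun h4 ω, h3]
      simp [smul_eq_mul]
    filter_upwards [h0, heq] with ω h0 heq
    simp only [Pi.zero_apply] at h0
    rw [heq] at h0
    nlinarith [h0]
  rw [← ae_all_iff] at hc
  filter_upwards [hc] with ω hc
  set x := (μ[f|m]) ω with hx
  set g := (μ[fun ω => f ω ^ 2|m]) ω with hgdef
  refine le_of_forall_pos_le_add fun ε hε => ?_
  obtain ⟨c, hc1, hc2⟩ := exists_rat_btwn (show x - min 1 ε < x + min 1 ε by
    have : (0:ℝ) < min 1 ε := lt_min one_pos hε
    linarith)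
  have habs : |x - (c : ℝ)| < min 1 ε := by
    rw [abs_lt]; constructor <;> [linarith; linarith]
  have h1 : (x - (c : ℝ)) ^ 2 < min 1 ε ^ 2 := by
    have := sq_abs (x - (c:ℝ))
    nlinarith [abs_nonneg (x - (c:ℝ))]
  have h2 : min 1 ε ^ 2 ≤ ε := by
    have ha : min 1 ε ≤ 1 := min_le_left _ _
    have hb : min 1 ε ≤ ε := min_le_right _ _
    nlinarith [lt_min one_pos hε]
  nlinarith [hc c]

/-- If `Xp' + Xq' = Xp + Xq` a.s. and the conditional expectations (given the
σ-algebra `m` generated by `(Xp, Xq)`, here: any `m` making `Xp, Xq` measurable)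
satisfy `E[Xp'|m] = Xp` and `E[Xq'|m] = Xq`, then
`E[Xp'·Xq'|m] ≤ Xp·Xq` almost surely. -/
theorem stmt2 {Ω : Type*} [m0 : MeasurableSpace Ω] (μ : Measure Ω) [IsProbabilityMeasure μ]
    (Xp Xq Xp' Xq' : Ω → ℝ) (m : MeasurableSpace Ω) (hm : m ≤ m0)
    (hXp : StronglyMeasurable[m] Xp) (hXq : StronglyMeasurable[m] Xq)
    (hsum : ∀ᵐ ω ∂μ, Xp' ω + Xq' ω = Xp ω + Xq ω)
    (hIntp : Integrable Xp' μ) (hIntq : Integrable Xq' μ)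
    (hIntpq : Integrable (fun ω => Xp' ω * Xq' ω) μ)
    (hIntp2 : Integrable (fun ω => (Xp' ω) ^ 2) μ)
    (hIntq2 : Integrable (fun ω => (Xq' ω) ^ 2) μ)
    (hEp : μ[Xp' | m] =ᵐ[μ] Xp) (hEq : μ[Xq' | m] =ᵐ[μ] Xq) :
    μ[fun ω => Xp' ω * Xq' ω | m] ≤ᵐ[μ] fun ω => Xp ω * Xq ω := by
  -- Xp'·Xq' = (Xp+Xq)·Xp' - Xp'² a.e.
  have key : (fun ω => Xp' ω * Xq' ω)
      =ᵐ[μ] (fun ω => (Xp ω + Xq ω) * Xp' ω - Xp' ω ^ 2) := by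
    filter_upwards [hsum] with ω h
    have : Xq' ω = Xp ω + Xq ω - Xp' ω := by linarith
    rw [this]; ring
  have hIntmul : Integrable ((Xp + Xq) * Xp') μ := by
    refine (hIntpq.add hIntp2).congr ?_
    filter_upwards [hsum] with ω h
    simp only [Pi.mul_apply, Pi.add_apply]
    linear_combination Xp' ω * h
  have h1 : μ[fun ω => Xp' ω * Xq' ω|m]
      =ᵐ[μ] μ[(Xp + Xq) * Xp' - fun ω => Xp' ω ^ 2|m] := by
    refine condExp_congr_ae ?_
    filter_upwards [key] with ω h
    simpa using h
  have h2 := condExp_sub (m := m) hIntmul hIntp2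
  have hXpq : StronglyMeasurable[m] (Xp + Xq) := hXp.add hXq
  have h3 := condExp_mul_of_stronglyMeasurable_left (μ := μ) hXpq hIntmul hIntp
  have h4 := sq_condexp_le_condexp_sq hm μ Xp' hIntp hIntp2
  filter_upwards [h1, h2, h3, h4, hEp] with ω h1 h2 h3 h4 hEp
  simp only [Pi.sub_apply, Pi.mul_apply, Pi.add_apply] at *
  rw [hEp] at h4
  rw [h1, h2, h3, hEp]
  nlinarith [h4]
end

section
/- Let T be a rooted tree with nonnegative node weights w_v, and for a leaf u let p(u) denote the set of nodes on the root-to-u path. For a node set V' and leaf u define dis(u, V') := ∑_{v ∈ V' ∩ p(u)} w_v. Define D(u, x) recursively over subtrees by D(leaf, 0) = 0, D(leaf, 1) = w_leaf, and D(u, x) = min( w_u + min over distributions of x−1 picks among children, min over distributions of x picks among children ) of the maximum of the children's values. Then D(root, k) equals the minimum over all k-element node sets V' of max over leaves u of dis(u, V'). -/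
open scoped Classical
set_option linter.unusedSectionVars false
set_option linter.unusedVariables false

namespace DP10



variable {V : Type*} [Fintype V] [DecidableEq V] (par : V → V)

lemma anc_trans {a b c : V} (h1 : ∃ n, par^[n] a = b) (h2 : ∃ n, par^[n] b = c) :
    ∃ n, par^[n] a = c := by
  obtain ⟨n, rfl⟩ := h1; obtain ⟨m, h⟩ := h2
  exact ⟨m + n, by rw [Function.iterate_add_apply]; exact h⟩

variable {r : V} (hroot : par r = r) (hreach : ∀ v, ∃ n, par^[n] v = r)

include hroot hreach in
lemma anc_antisymm {a b : V} (h1 : ∃ n, par^[n] a = b) (h2 : ∃ m, par^[m] b = a) :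
    a = b := by
  obtain ⟨n, h1⟩ := h1; obtain ⟨m, h2⟩ := h2
  rcases Nat.eq_zero_or_pos n with hn | hn
  · subst hn; simpa using h1
  have hcyc : ∀ q, par^[(m + n) * q] a = a := by
    intro q; induction q with
    | zero => simp
    | succ q ih =>
      rw [Nat.mul_succ, Function.iterate_add_apply,
        Function.iterate_add_apply, h1, h2, ih]
  obtain ⟨N, hN⟩ := hreach a
  have hge : (m + n) * (N + 1) = ((m + n) * (N + 1) - N) + N := by
    have : N + 1 ≤ (m + n) * (N + 1) := Nat.le_mul_of_pos_left _ (by omega)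
    omega
  have ha : a = r := by
    have h := hcyc (N + 1)
    rw [hge, Function.iterate_add_apply, hN, Function.iterate_fixed hroot] at h
    exact h.symm
  subst ha
  rw [Function.iterate_fixed hroot] at h1
  exact h1

include hroot hreach in
lemma not_anc_child {u v : V} (hpar : par v = u) (hne : v ≠ u) :
    ¬ ∃ k, par^[k] u = v := by
  intro h
  exact hne (anc_antisymm par hroot hreach ⟨1, by simpa using hpar⟩ h)

lemma exists_child : ∀ n (a : V), a ≠ u → par^[n] a = u →
    ∃ v, par v = u ∧ v ≠ u ∧ ∃ m, par^[m] a = v := by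
  intro n
  induction n with
  | zero => intro a hau h; exact absurd h hau
  | succ n ih =>
    intro a hau h
    rw [Function.iterate_succ_apply'] at h
    by_cases hv : par^[n] a = u
    · exact ih a hau hv
    · exact ⟨par^[n] a, h, hv, n, rfl⟩

include hroot hreach in
lemma child_disjoint_aux {u v v' a : V} (hv : par v = u) (hv1 : v ≠ u)
    (hv' : par v' = u) (hv'1 : v' ≠ u) {n m : ℕ} (hnm : n ≤ m)
    (h1 : par^[n] a = v) (h2 : par^[m] a = v') : v = v' := by
  have h3 : par^[m - n] v = v' := by
    rw [← h1, ← Function.iterate_add_apply, Nat.sub_add_cancel hnm]; exact h2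
  rcases Nat.eq_zero_or_pos (m - n) with h0 | h0
  · rw [h0] at h3; exact h3
  · exfalso
    have h4 : par^[m - n - 1] u = v' := by
      have := h3
      rw [show m - n = (m - n - 1) + 1 by omega, Function.iterate_succ_apply, hv] at this
      exact this
    exact not_anc_child par hroot hreach hv' hv'1 ⟨m - n - 1, h4⟩

include hroot hreach in
lemma child_disjoint {u v v' a : V} (hv : par v = u) (hv1 : v ≠ u)
    (hv' : par v' = u) (hv'1 : v' ≠ u) (h1 : ∃ n, par^[n] a = v)
    (h2 : ∃ m, par^[m] a = v') : v = v' := by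
  obtain ⟨n, h1⟩ := h1; obtain ⟨m, h2⟩ := h2
  rcases le_total n m with h | h
  · exact child_disjoint_aux par hroot hreach hv hv1 hv' hv'1 h h1 h2
  · exact (child_disjoint_aux par hroot hreach hv' hv'1 hv hv1 h h2 h1).symm




noncomputable def sub (u : V) : Finset V :=
  Finset.univ.filter (fun a => ∃ n, par^[n] a = u)

lemma mem_sub {u a : V} : a ∈ sub par u ↔ ∃ n, par^[n] a = u := by
  simp [sub]

lemma self_mem_sub (u : V) : u ∈ sub par u := (mem_sub par).2 ⟨0, rfl⟩

lemma sub_subset_of_child {u v : V} (hv : par v = u) : sub par v ⊆ sub par u := by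
  intro a ha
  exact (mem_sub par).2 (anc_trans par ((mem_sub par).1 ha) ⟨1, by simpa using hv⟩)

include hroot hreach in
lemma root_not_mem_child_sub {u v : V} (hv : par v = u) (hvne : v ≠ u) :
    u ∉ sub par v := by
  rw [mem_sub]
  exact not_anc_child par hroot hreach hv hvne

include hroot hreach in
lemma sub_card_lt {u v : V} (hv : par v = u) (hvne : v ≠ u) :
    (sub par v).card < (sub par u).card :=
  Finset.card_lt_card ⟨sub_subset_of_child par hv, fun hsub =>
    root_not_mem_child_sub par hroot hreach hv hvne (hsub (self_mem_sub par u))⟩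

include hroot hreach in
lemma exists_leaf : ∀ (N : ℕ) (u : V), (sub par u).card ≤ N →
    ∃ a, (∀ v, par v = a → v = a) ∧ a ∈ sub par u := by
  intro N
  induction N with
  | zero =>
    intro u h
    exact absurd (Finset.card_pos.2 ⟨u, self_mem_sub par u⟩) (by omega)
  | succ N ih =>
    intro u h
    by_cases hl : ∀ v, par v = u → v = u
    · exact ⟨u, hl, self_mem_sub par u⟩
    · push_neg at hl
      obtain ⟨v, hv, hvne⟩ := hl
      have hlt := sub_card_lt par hroot hreach hv hvne
      obtain ⟨a, hla, ha⟩ := ih v (by omega)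
      exact ⟨a, hla, sub_subset_of_child par hv ha⟩

include hroot hreach in
lemma mem_sub_cases {u a : V} (ha : a ∈ sub par u) (hau : a ≠ u) :
    ∃ v, par v = u ∧ v ≠ u ∧ a ∈ sub par v := by
  obtain ⟨n, hn⟩ := (mem_sub par).1 ha
  obtain ⟨v, h1, h2, h3⟩ := exists_child par n a hau hn
  exact ⟨v, h1, h2, (mem_sub par).2 h3⟩

include hroot hreach in
lemma ne_root_of_mem_child {u v a : V} (hv : par v = u) (hvne : v ≠ u)
    (ha : a ∈ sub par v) : a ≠ u := by
  rintro rfl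
  exact root_not_mem_child_sub par hroot hreach hv hvne ha

include hroot hreach in
lemma sub_disjoint {u v v' : V} (hv : par v = u) (hv1 : v ≠ u)
    (hv' : par v' = u) (hv'1 : v' ≠ u) (hne : v ≠ v') :
    Disjoint (sub par v) (sub par v') := by
  rw [Finset.disjoint_left]
  intro a ha ha'
  exact hne (child_disjoint par hroot hreach hv hv1 hv' hv'1
    ((mem_sub par).1 ha) ((mem_sub par).1 ha'))


lemma attain (p : Finset V → Prop) (f : Finset V → ENNReal)
    (h : (⨅ (s : Finset V) (_ : p s), f s) ≠ ⊤) :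
    ∃ s, p s ∧ f s = ⨅ (s : Finset V) (_ : p s), f s := by
  have hne : (Finset.univ.filter p : Finset (Finset V)).Nonempty := by
    by_contra hcon
    rw [Finset.not_nonempty_iff_eq_empty, Finset.filter_eq_empty_iff] at hcon
    exact h (by simp [fun s => hcon (Finset.mem_univ s)])
  obtain ⟨s, hs, hval⟩ := Finset.exists_mem_eq_inf (Finset.univ.filter p) hne f
  refine ⟨s, (Finset.mem_filter.1 hs).2, ?_⟩
  rw [← hval, Finset.inf_eq_iInf]
  simp [Finset.mem_filter]

lemma add_biInf {ι : Type*} [Nonempty ι] (a : ENNReal) (P : ι → Prop) (f : ι → ENNReal) :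
    a + ⨅ (i) (_ : P i), f i = ⨅ (i) (_ : P i), (a + f i) := by
  rw [ENNReal.add_iInf]
  refine iInf_congr fun i => ?_
  by_cases h : P i <;> simp [h]

lemma add_biSup {ι : Type*} (a : ENNReal) {P : ι → Prop} (hP : ∃ i, P i) (f : ι → ENNReal) :
    a + ⨆ (i) (_ : P i), f i = ⨆ (i) (_ : P i), (a + f i) := by
  obtain ⟨i0, hi0⟩ := hP
  haveI : Nonempty {i // P i} := ⟨⟨i0, hi0⟩⟩
  rw [iSup_subtype', iSup_subtype', ENNReal.add_iSup]

noncomputable def Cset (u : V) : Finset V :=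
  Finset.univ.filter (fun v => par v = u ∧ v ≠ u)

lemma mem_Cset {u v : V} : v ∈ Cset par u ↔ par v = u ∧ v ≠ u := by simp [Cset]

noncomputable def Lvs (u : V) : Finset V :=
  Finset.univ.filter (fun a => (∀ v, par v = a → v = a) ∧ ∃ n, par^[n] a = u)

lemma mem_Lvs {u a : V} :
    a ∈ Lvs par u ↔ (∀ v, par v = a → v = a) ∧ a ∈ sub par u := by
  simp [Lvs, mem_sub]

include hroot hreach in
lemma Lvs_nonempty (u : V) : ∃ a, a ∈ Lvs par u := by
  obtain ⟨a, h1, h2⟩ := exists_leaf par hroot hreach (sub par u).card u le_rfl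
  exact ⟨a, (mem_Lvs par).2 ⟨h1, h2⟩⟩

include hroot hreach in
lemma biSup_leaves {u : V} (hnl : ∃ v, par v = u ∧ v ≠ u) (F : V → ENNReal) :
    ⨆ a ∈ Lvs par u, F a = ⨆ v ∈ Cset par u, ⨆ a ∈ Lvs par v, F a := by
  apply le_antisymm
  · refine iSup₂_le fun a ha => ?_
    rw [mem_Lvs] at ha
    obtain ⟨hla, hau⟩ := ha
    have hane : a ≠ u := by rintro rfl; obtain ⟨v, h1, h2⟩ := hnl; exact h2 (hla v h1)
    obtain ⟨v, h1, h2, h3⟩ := mem_sub_cases par hroot hreach hau hane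
    refine le_iSup₂_of_le v ((mem_Cset par).2 ⟨h1, h2⟩) ?_
    exact le_iSup₂_of_le a ((mem_Lvs par).2 ⟨hla, h3⟩) le_rfl
  · refine iSup₂_le fun v hv => iSup₂_le fun a ha => ?_
    rw [mem_Cset] at hv; rw [mem_Lvs] at ha
    refine le_iSup₂_of_le a ?_ le_rfl
    exact (mem_Lvs par).2 ⟨ha.1, sub_subset_of_child par hv.1 ha.2⟩

include hroot hreach in
lemma dis_decomp (w : V → ENNReal) {u v a : V} (hv : par v = u) (hvne : v ≠ u)
    (ha : a ∈ sub par v) {V' : Finset V} (hV' : ∀ b ∈ V', b ∈ sub par u) :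
    ∑ b ∈ V'.filter (fun b => ∃ n, par^[n] a = b), w b
    = (if u ∈ V' then w u else 0)
      + ∑ b ∈ (V'.filter (fun b => b ∈ sub par v)).filter
          (fun b => ∃ n, par^[n] a = b), w b := by
  have key : ∀ b ∈ V', (∃ n, par^[n] a = b) → b ≠ u → b ∈ sub par v := by
    intro b hbV hanc hbu
    obtain ⟨v', h1, h2, h3⟩ := mem_sub_cases par hroot hreach (hV' b hbV) hbu
    have hav' : a ∈ sub par v' :=
      (mem_sub par).2 (anc_trans par hanc ((mem_sub par).1 h3))
    have heq := child_disjoint par hroot hreach h1 h2 hv hvne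
      ((mem_sub par).1 hav') ((mem_sub par).1 ha)
    exact heq ▸ h3
  have hanc_u : ∃ n, par^[n] a = u :=
    anc_trans par ((mem_sub par).1 ha) ⟨1, by simpa using hv⟩
  by_cases huV : u ∈ V'
  · rw [if_pos huV]
    have hs : V'.filter (fun b => ∃ n, par^[n] a = b)
        = insert u ((V'.filter (fun b => b ∈ sub par v)).filter
            (fun b => ∃ n, par^[n] a = b)) := by
      ext b
      simp only [Finset.mem_filter, Finset.mem_insert]
      constructor
      · rintro ⟨hbV, hanc⟩
        by_cases hbu : b = u
        · exact Or.inl hbu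
        · exact Or.inr ⟨⟨hbV, key b hbV hanc hbu⟩, hanc⟩
      · rintro (rfl | ⟨⟨hbV, _⟩, hanc⟩)
        · exact ⟨huV, hanc_u⟩
        · exact ⟨hbV, hanc⟩
    rw [hs, Finset.sum_insert]
    simp only [Finset.mem_filter]
    rintro ⟨⟨-, husub⟩, -⟩
    exact root_not_mem_child_sub par hroot hreach hv hvne husub
  · rw [if_neg huV, zero_add]
    congr 1
    ext b
    simp only [Finset.mem_filter]
    constructor
    · rintro ⟨hbV, hanc⟩
      have hbu : b ≠ u := by rintro rfl; exact huV hbV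
      exact ⟨⟨hbV, key b hbV hanc hbu⟩, hanc⟩
    · rintro ⟨⟨hbV, _⟩, hanc⟩
      exact ⟨hbV, hanc⟩

include hroot hreach in
lemma card_decomp {u : V} {V' : Finset V} (hV' : ∀ b ∈ V', b ∈ sub par u) :
    ∑ v ∈ Cset par u, (V'.filter (fun b => b ∈ sub par v)).card
      = (V'.erase u).card := by
  have hdis : ∀ x ∈ Cset par u, ∀ y ∈ Cset par u, x ≠ y →
      Disjoint (V'.filter (fun b => b ∈ sub par x))
        (V'.filter (fun b => b ∈ sub par y)) := by
    intro x hx y hy hxy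
    rw [mem_Cset] at hx hy
    rw [Finset.disjoint_left]
    rintro a ha hb
    rw [Finset.mem_filter] at ha hb
    exact Finset.disjoint_left.1
      (sub_disjoint par hroot hreach hx.1 hx.2 hy.1 hy.2 hxy) ha.2 hb.2
  rw [← Finset.card_biUnion hdis]
  congr 1
  ext b
  simp only [Finset.mem_biUnion, Finset.mem_erase, Finset.mem_filter, mem_Cset]
  constructor
  · rintro ⟨v, ⟨h1, h2⟩, hbV, hbv⟩
    exact ⟨ne_root_of_mem_child par hroot hreach h1 h2 hbv, hbV⟩
  · rintro ⟨hbu, hbV⟩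
    obtain ⟨v, h1, h2, h3⟩ := mem_sub_cases par hroot hreach (hV' b hbV) hbu
    exact ⟨v, ⟨h1, h2⟩, hbV, h3⟩


noncomputable def Ans (w : V → ENNReal) (u : V) (x : ℕ) : ENNReal :=
  ⨅ (V' : Finset V) (_ : (∀ b ∈ V', b ∈ sub par u) ∧ V'.card = x),
    ⨆ a ∈ Lvs par u, ∑ b ∈ V'.filter (fun b => ∃ n, par^[n] a = b), w b

lemma Ans_def (w : V → ENNReal) (u : V) (x : ℕ) :
    Ans par w u x = ⨅ (V' : Finset V) (_ : (∀ b ∈ V', b ∈ sub par u) ∧ V'.card = x),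
      ⨆ a ∈ Lvs par u, ∑ b ∈ V'.filter (fun b => ∃ n, par^[n] a = b), w b := rfl

include hroot hreach in
lemma Ans_le_parts (w : V → ENNReal) {u : V} (hch : ∃ v, par v = u ∧ v ≠ u)
    (c : V → ℕ) (hsupp : ∀ v, c v ≠ 0 → par v = u ∧ v ≠ u) :
    Ans par w u (∑ v, c v) ≤ (⨆ v ∈ Cset par u, Ans par w v (c v)) ∧
    Ans par w u ((∑ v, c v) + 1) ≤ w u + ⨆ v ∈ Cset par u, Ans par w v (c v) := by
  have hCne : ∃ v, v ∈ Cset par u := by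
    obtain ⟨v, h1, h2⟩ := hch
    exact ⟨v, (mem_Cset par).2 ⟨h1, h2⟩⟩
  by_cases htop : ∃ v ∈ Cset par u, Ans par w v (c v) = ⊤
  · obtain ⟨v, hv, hvt⟩ := htop
    have hsup : (⨆ v ∈ Cset par u, Ans par w v (c v)) = ⊤ :=
      top_le_iff.1 (le_iSup₂_of_le v hv hvt.ge)
    constructor
    · rw [hsup]; exact le_top
    · rw [hsup, add_top]; exact le_top
  · push_neg at htop
    have hwit : ∀ v, ∃ s : Finset V, v ∈ Cset par u →
        ((∀ b ∈ s, b ∈ sub par v) ∧ s.card = c v) ∧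
        (⨆ a ∈ Lvs par v, ∑ b ∈ s.filter (fun b => ∃ n, par^[n] a = b), w b)
          = Ans par w v (c v) := by
      intro v
      by_cases hv : v ∈ Cset par u
      · obtain ⟨s, hs1, hs2⟩ := attain
          (fun s => (∀ b ∈ s, b ∈ sub par v) ∧ s.card = c v)
          (fun s => ⨆ a ∈ Lvs par v,
            ∑ b ∈ s.filter (fun b => ∃ n, par^[n] a = b), w b)
          (by rw [← Ans_def]; exact htop v hv)
        exact ⟨s, fun _ => ⟨hs1, by rw [hs2, ← Ans_def]⟩⟩
      · exact ⟨∅, fun hv' => absurd hv' hv⟩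
    choose g hg using hwit
    set W : Finset V := (Cset par u).biUnion g with hWdef
    have hgsub : ∀ v ∈ Cset par u, ∀ b ∈ g v, b ∈ sub par v :=
      fun v hv b hb => ((hg v hv).1).1 b hb
    have hWsub : ∀ b ∈ W, b ∈ sub par u := by
      intro b hb
      obtain ⟨v, hv, hbv⟩ := Finset.mem_biUnion.1 hb
      exact sub_subset_of_child par ((mem_Cset par).1 hv).1 (hgsub v hv b hbv)
    have hWdis : ∀ v1 ∈ Cset par u, ∀ v2 ∈ Cset par u, v1 ≠ v2 →
        Disjoint (g v1) (g v2) := by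
      intro v1 h1 v2 h2 h12
      have hc1 := (mem_Cset par).1 h1
      have hc2 := (mem_Cset par).1 h2
      rw [Finset.disjoint_left]
      intro b hb1 hb2
      exact Finset.disjoint_left.1
        (sub_disjoint par hroot hreach hc1.1 hc1.2 hc2.1 hc2.2 h12)
        (hgsub v1 h1 b hb1) (hgsub v2 h2 b hb2)
    have hWcard : W.card = ∑ v, c v := by
      rw [hWdef, Finset.card_biUnion hWdis]
      rw [show ∑ v ∈ Cset par u, (g v).card = ∑ v ∈ Cset par u, c v from
        Finset.sum_congr rfl fun v hv => ((hg v hv).1).2]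
      exact Finset.sum_subset (Finset.subset_univ _) fun v _ hv => by
        by_contra h0
        exact hv ((mem_Cset par).2 (hsupp v h0))
    have hWfil : ∀ v ∈ Cset par u, W.filter (fun b => b ∈ sub par v) = g v := by
      intro v hv
      ext b
      rw [Finset.mem_filter]
      constructor
      · rintro ⟨hbW, hbv⟩
        obtain ⟨v', hv', hbv'⟩ := Finset.mem_biUnion.1 hbW
        have hcv := (mem_Cset par).1 hv
        have hcv' := (mem_Cset par).1 hv'
        have heq : v' = v := child_disjoint par hroot hreach hcv'.1 hcv'.2 hcv.1 hcv.2
          ((mem_sub par).1 (hgsub v' hv' b hbv')) ((mem_sub par).1 hbv)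
        exact heq ▸ hbv'
      · intro hb
        exact ⟨Finset.mem_biUnion.2 ⟨v, hv, hb⟩, hgsub v hv b hb⟩
    have huW : u ∉ W := by
      intro hu
      obtain ⟨v, hv, hbv⟩ := Finset.mem_biUnion.1 hu
      have hcv := (mem_Cset par).1 hv
      exact root_not_mem_child_sub par hroot hreach hcv.1 hcv.2 (hgsub v hv u hbv)
    constructor
    · rw [Ans_def]
      refine le_trans (iInf₂_le W ⟨hWsub, hWcard⟩) ?_
      rw [biSup_leaves par hroot hreach hch]
      refine iSup₂_le fun v hv => le_iSup₂_of_le v hv ?_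
      have hcv := (mem_Cset par).1 hv
      refine le_of_eq ?_
      rw [← (hg v hv).2]
      refine biSup_congr fun a ha => ?_
      rw [dis_decomp par hroot hreach w hcv.1 hcv.2 ((mem_Lvs par).1 ha).2 hWsub,
        if_neg huW, zero_add, hWfil v hv]
    · rw [Ans_def]
      have hWsub' : ∀ b ∈ insert u W, b ∈ sub par u := by
        intro b hb
        rcases Finset.mem_insert.1 hb with rfl | hbW
        · exact self_mem_sub par _
        · exact hWsub b hbW
      have hWcard' : (insert u W).card = (∑ v, c v) + 1 := by
        rw [Finset.card_insert_of_notMem huW, hWcard]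
      refine le_trans (iInf₂_le (insert u W) ⟨hWsub', hWcard'⟩) ?_
      rw [biSup_leaves par hroot hreach hch, ENNReal.add_biSup' hCne]
      refine iSup₂_le fun v hv => le_iSup₂_of_le v hv ?_
      have hcv := (mem_Cset par).1 hv
      refine le_of_eq ?_
      rw [← (hg v hv).2, ENNReal.add_biSup' (Lvs_nonempty par hroot hreach v)]
      refine biSup_congr fun a ha => ?_
      rw [dis_decomp par hroot hreach w hcv.1 hcv.2 ((mem_Lvs par).1 ha).2 hWsub',
        if_pos (Finset.mem_insert_self u W)]
      congr 1
      rw [Finset.filter_insert,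
        if_neg (root_not_mem_child_sub par hroot hreach hcv.1 hcv.2), hWfil v hv]

include hroot hreach in
lemma main (w : V → ENNReal) (D : V → ℕ → ENNReal)
    (hleaf0 : ∀ u, (∀ v, par v = u → v = u) → D u 0 = 0)
    (hleaf1 : ∀ u, (∀ v, par v = u → v = u) → D u 1 = w u)
    (hleaf2 : ∀ u x, (∀ v, par v = u → v = u) → 2 ≤ x → D u x = ⊤)
    (hnode : ∀ u x, (∃ v, par v = u ∧ v ≠ u) →
      D u x = min
        (if 1 ≤ x then
          w u + ⨅ (c : V → ℕ)
            (_ : (∀ v, c v ≠ 0 → par v = u ∧ v ≠ u) ∧ ∑ v, c v = x - 1),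
            ⨆ v ∈ Finset.univ.filter (fun v => par v = u ∧ v ≠ u), D v (c v)
        else ⊤)
        (⨅ (c : V → ℕ)
            (_ : (∀ v, c v ≠ 0 → par v = u ∧ v ≠ u) ∧ ∑ v, c v = x),
            ⨆ v ∈ Finset.univ.filter (fun v => par v = u ∧ v ≠ u), D v (c v))) :
    ∀ (N : ℕ) (u : V), (sub par u).card ≤ N → ∀ x, D u x = Ans par w u x := by
  intro N
  induction N with
  | zero =>
    intro u h
    exact absurd (Finset.card_pos.2 ⟨u, self_mem_sub par u⟩) (by omega)
  | succ N ih =>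
    intro u hcard x
    by_cases hl : ∀ v, par v = u → v = u
    · -- leaf case
      have hsub : sub par u = {u} := by
        ext a
        simp only [Finset.mem_singleton]
        constructor
        · intro ha
          by_contra hau
          obtain ⟨v, h1, h2, _⟩ := mem_sub_cases par hroot hreach ha hau
          exact h2 (hl v h1)
        · rintro rfl; exact self_mem_sub par _
      have hLvs : Lvs par u = {u} := by
        ext a
        rw [mem_Lvs, Finset.mem_singleton]
        constructor
        · rintro ⟨_, hau⟩
          simpa [hsub] using hau
        · rintro rfl; exact ⟨hl, self_mem_sub par _⟩
      have huLvs : u ∈ Lvs par u := by rw [hLvs]; exact Finset.mem_singleton_self u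
      match x with
      | 0 =>
        rw [hleaf0 u hl, Ans_def]
        refine le_antisymm zero_le ?_
        refine iInf₂_le_of_le ∅ ⟨by simp, by simp⟩ ?_
        refine iSup₂_le fun a _ => ?_
        simp
      | 1 =>
        rw [hleaf1 u hl, Ans_def]
        apply le_antisymm
        · refine le_iInf₂ fun V' hV' => ?_
          obtain ⟨b, hb⟩ := Finset.card_eq_one.1 hV'.2
          have hbu : b = u := by
            have := hV'.1 b (by simp [hb])
            simpa [hsub] using this
          subst hbu
          refine le_iSup₂_of_le b huLvs ?_
          rw [hb, Finset.filter_singleton, if_pos ⟨0, rfl⟩, Finset.sum_singleton]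
        · refine iInf₂_le_of_le {u} ⟨?_, by simp⟩ ?_
          · intro b hb
            rw [Finset.mem_singleton] at hb
            rw [hb]; exact self_mem_sub par u
          · refine iSup₂_le fun a ha => ?_
            have hau : a = u := by rwa [hLvs, Finset.mem_singleton] at ha
            subst hau
            rw [Finset.filter_singleton, if_pos ⟨0, rfl⟩, Finset.sum_singleton]
      | (x + 2) =>
        rw [hleaf2 u x.succ.succ hl (by omega), Ans_def]
        refine le_antisymm ?_ le_top
        refine le_iInf fun V' => le_iInf fun hV' => ?_
        exfalso
        have hsubs : V' ⊆ {u} := fun b hb => by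
          rw [← hsub]; exact hV'.1 b hb
        have := Finset.card_le_card hsubs
        rw [hV'.2, Finset.card_singleton] at this
        omega
    · -- internal node
      push_neg at hl
      obtain ⟨v0, hv0, hv0ne⟩ := hl
      have hch : ∃ v, par v = u ∧ v ≠ u := ⟨v0, hv0, hv0ne⟩
      have hCne : ∃ v, v ∈ Cset par u := ⟨v0, (mem_Cset par).2 ⟨hv0, hv0ne⟩⟩
      have IHc : ∀ v, par v = u ∧ v ≠ u → ∀ y, D v y = Ans par w v y := by
        intro v hv y
        have := sub_card_lt par hroot hreach hv.1 hv.2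
        exact ih v (by omega) y
      rw [hnode u x hch]
      have hDA : ∀ (c : V → ℕ),
          (⨆ v ∈ Finset.univ.filter (fun v => par v = u ∧ v ≠ u), D v (c v))
          = ⨆ v ∈ Cset par u, Ans par w v (c v) := by
        intro c
        refine iSup_congr fun v => ?_
        by_cases hv : par v = u ∧ v ≠ u
        · simp only [Cset, Finset.mem_filter, Finset.mem_univ, true_and, hv,
            iSup_pos, IHc v hv]
        · simp [Cset, hv]
      simp only [hDA]
      rw [Ans_def par w u x]
      apply le_antisymm
      · -- min ≤ Ans
        refine le_iInf₂ fun V' hV' => ?_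
        obtain ⟨hV'sub, hV'card⟩ := hV'
        set c : V → ℕ := fun v =>
          if par v = u ∧ v ≠ u then (V'.filter (fun b => b ∈ sub par v)).card
          else 0 with hc
        have hcsupp : ∀ v, c v ≠ 0 → par v = u ∧ v ≠ u := by
          intro v h
          by_contra hcon
          exact h (by simp only [hc]; exact if_neg hcon)
        have hzero : ∀ v ∈ Finset.univ, v ∉ Cset par u → c v = 0 := by
          intro v _ hv
          simp only [hc]
          exact if_neg fun h => hv ((mem_Cset par).2 h)
        have hcsum : ∑ v, c v = (V'.erase u).card := by
          rw [← Finset.sum_subset (Finset.subset_univ (Cset par u)) hzero]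
          rw [← card_decomp par hroot hreach hV'sub]
          exact Finset.sum_congr rfl fun v hv => by
            simp only [hc]; exact if_pos ((mem_Cset par).1 hv)
        have hAnsle : ∀ v, par v = u ∧ v ≠ u →
            Ans par w v (c v) ≤ ⨆ a ∈ Lvs par v,
              ∑ b ∈ (V'.filter (fun b => b ∈ sub par v)).filter
                (fun b => ∃ n, par^[n] a = b), w b := by
          intro v hv
          rw [Ans_def]
          refine iInf₂_le _ ⟨fun b hb => (Finset.mem_filter.1 hb).2, ?_⟩
          simp only [hc]
          rw [if_pos hv]
        by_cases huV : u ∈ V'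
        · refine min_le_of_left_le ?_
          rw [if_pos (show 1 ≤ x by
            rw [← hV'card]; exact Finset.card_pos.2 ⟨u, huV⟩)]
          refine le_trans (add_le_add_right
            (iInf₂_le c ⟨hcsupp, by
              rw [hcsum, Finset.card_erase_of_mem huV, hV'card]⟩) (w u)) ?_
          rw [ENNReal.add_biSup' hCne, biSup_leaves par hroot hreach hch]
          refine iSup₂_le fun v hv => le_iSup₂_of_le v hv ?_
          have hv' := (mem_Cset par).1 hv
          refine le_trans (add_le_add_right (hAnsle v hv') (w u)) ?_
          rw [ENNReal.add_biSup' (Lvs_nonempty par hroot hreach v)]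
          refine iSup₂_le fun a ha => le_iSup₂_of_le a ha ?_
          rw [dis_decomp par hroot hreach w hv'.1 hv'.2 ((mem_Lvs par).1 ha).2 hV'sub,
            if_pos huV]
        · refine min_le_of_right_le ?_
          refine le_trans (iInf₂_le c ⟨hcsupp, by
            rw [hcsum, Finset.erase_eq_of_notMem huV, hV'card]⟩) ?_
          rw [biSup_leaves par hroot hreach hch]
          refine iSup₂_le fun v hv => le_iSup₂_of_le v hv ?_
          have hv' := (mem_Cset par).1 hv
          refine le_trans (hAnsle v hv') ?_
          refine iSup₂_le fun a ha => le_iSup₂_of_le a ha ?_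
          rw [dis_decomp par hroot hreach w hv'.1 hv'.2 ((mem_Lvs par).1 ha).2 hV'sub,
            if_neg huV, zero_add]
      · rw [← Ans_def par w u x]
        refine le_min ?_ ?_
        · by_cases hx : 1 ≤ x
          · rw [if_pos hx, ENNReal.add_iInf]
            refine le_iInf fun c => ?_
            by_cases hPc : (∀ v, c v ≠ 0 → par v = u ∧ v ≠ u) ∧ ∑ v, c v = x - 1
            · rw [iInf_pos hPc]
              have := (Ans_le_parts par hroot hreach w hch c hPc.1).2
              rw [hPc.2, show x - 1 + 1 = x by omega] at this
              exact this
            · rw [iInf_neg hPc, add_top]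
              exact le_top
          · rw [if_neg hx]
            exact le_top
        · refine le_iInf₂ fun c hPc => ?_
          have := (Ans_le_parts par hroot hreach w hch c hPc.1).1
          rw [hPc.2] at this
          exact this

end DP10

/-- Correctness of the dynamic program for node-selection-on-tree. The rooted tree
is given by a parent map `par` (with `par r = r` and every node reaching `r`),
node weights `w`, leaves are nodes with no children, and
`dis(u, V') = ∑_{v ∈ V' ∩ p(u)} w v` where `p(u)` is the set of ancestors of `u`
(nodes on the root-to-`u` path). Any table `D` satisfying the DP recurrence
satisfies `D r k = min_{|V'| = k} max_{leaf u} dis(u, V')`. -/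
theorem stmt10 {V : Type*} [Fintype V] [DecidableEq V]
    (r : V) (par : V → V) (w : V → ENNReal)
    (hroot : par r = r)
    (hreach : ∀ v, ∃ n, par^[n] v = r)
    (D : V → ℕ → ENNReal)
    (hleaf0 : ∀ u, (∀ v, par v = u → v = u) → D u 0 = 0)
    (hleaf1 : ∀ u, (∀ v, par v = u → v = u) → D u 1 = w u)
    (hleaf2 : ∀ u x, (∀ v, par v = u → v = u) → 2 ≤ x → D u x = ⊤)
    (hnode : ∀ u x, (∃ v, par v = u ∧ v ≠ u) →
      D u x = min
        (if 1 ≤ x then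
          w u + ⨅ (c : V → ℕ)
            (_ : (∀ v, c v ≠ 0 → par v = u ∧ v ≠ u) ∧ ∑ v, c v = x - 1),
            ⨆ v ∈ Finset.univ.filter (fun v => par v = u ∧ v ≠ u), D v (c v)
        else ⊤)
        (⨅ (c : V → ℕ)
            (_ : (∀ v, c v ≠ 0 → par v = u ∧ v ≠ u) ∧ ∑ v, c v = x),
            ⨆ v ∈ Finset.univ.filter (fun v => par v = u ∧ v ≠ u), D v (c v)))
    (k : ℕ) :
    D r k = ⨅ (V' : Finset V) (_ : V'.card = k),
      ⨆ u ∈ Finset.univ.filter (fun u : V => ∀ v, par v = u → v = u),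
        ∑ v ∈ V'.filter (fun v => ∃ n, par^[n] u = v), w v := by
  have hmain := DP10.main par hroot hreach w D hleaf0 hleaf1 hleaf2 hnode
    (DP10.sub par r).card r le_rfl k
  rw [hmain, DP10.Ans_def]
  have h1 : DP10.Lvs par r
      = Finset.univ.filter (fun u : V => ∀ v, par v = u → v = u) := by
    ext a
    rw [DP10.mem_Lvs, Finset.mem_filter]
    simp [DP10.mem_sub, hreach a]
  have h2 : ∀ V' : Finset V,
      ((∀ b ∈ V', b ∈ DP10.sub par r) ∧ V'.card = k) ↔ V'.card = k :=
    fun V' => ⟨And.right, fun h => ⟨fun b _ => (DP10.mem_sub par).2 (hreach b), h⟩⟩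
  simp only [h1, h2]
end
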